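/- Let 𝒴 ⊆ ℂⁿ be a p-dimensional subspace with Ritz values η₁ ≥ ⋯ ≥ η_p of A in 𝒴, assume η_p > λ_{p+1}, and let f : ℝ → ℝ satisfy |f(λ₁)| ≥ ⋯ ≥ |f(λ_p)| > ν_p where ν_p = max_{j ∈ {p+1, …, n}} |f(λⱼ)|. Let y ∈ 𝒴 be a nonzero vector with η_p ≤ ρ(y) < λ_p, and define y_p = Σ_{j=1}^{p} xⱼ(xⱼᴴy) and y° = f(λ_p) y_p + ν_p (y − y_p). Then y_p ≠ 0, y − y_p ≠ 0, and (ρ(y_p) − ρ(y°))/(ρ(y°) − ρ(y − y_p)) = (ν_p²/|f(λ_p)|²) · (ρ(y_p) − ρ(y))/(ρ(y) − ρ(y − y_p)). -/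

import Mathlib

/-- The Rayleigh quotient `ρ(v) = (vᴴAv)/(vᴴv)` of the Hermitian matrix `A`. -/
noncomputable def rayleigh {n : ℕ} (A : Matrix (Fin n) (Fin n) ℂ)
    (v : EuclideanSpace ℂ (Fin n)) : ℝ :=
  ((inner ℂ v (Matrix.toEuclideanLin A v) : ℂ)).re / ‖v‖ ^ 2

/-- The `i`-th largest Ritz value (1-indexed, `i ∈ {1, …, dim S}`) of the Hermitian
matrix `A` in the subspace `S`, characterized via the Courant–Fischer max-min
principle applied inside `S` (equivalently, the `i`-th largest eigenvalue of
`SᴴAS` for any orthonormal basis matrix `S`). -/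
noncomputable def ritzValue {n : ℕ} (A : Matrix (Fin n) (Fin n) ℂ)
    (S : Submodule ℂ (EuclideanSpace ℂ (Fin n))) (i : ℕ) : ℝ :=
  sSup {r : ℝ | ∃ T : Submodule ℂ (EuclideanSpace ℂ (Fin n)), T ≤ S ∧
    Module.finrank ℂ T = i ∧ ∀ v ∈ T, v ≠ 0 → r ≤ rayleigh A v}

/-- `f(A) = ∑ j, f(λ_j) x_j x_jᴴ` as a linear operator, for eigenvalues `lam`
and orthonormal eigenvectors `x` of `A`. -/
noncomputable def matFun {n : ℕ} (lam : Fin n → ℝ)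
    (x : Fin n → EuclideanSpace ℂ (Fin n)) (f : ℝ → ℝ) :
    EuclideanSpace ℂ (Fin n) →ₗ[ℂ] EuclideanSpace ℂ (Fin n) :=
  ∑ j : Fin n, (f (lam j) : ℂ) • ((innerSL ℂ (x j)).toLinearMap.smulRight (x j))

/-- `y` is a Ritz vector of `A` in `S` associated with the Ritz value `η`:
`y ∈ S`, `y ≠ 0`, `ρ(y) = η` and `Ay − ηy ⊥ S`. -/
def IsRitzVector {n : ℕ} (A : Matrix (Fin n) (Fin n) ℂ)
    (S : Submodule ℂ (EuclideanSpace ℂ (Fin n))) (η : ℝ)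
    (y : EuclideanSpace ℂ (Fin n)) : Prop :=
  y ∈ S ∧ y ≠ 0 ∧ rayleigh A y = η ∧
    ∀ v ∈ S, (inner ℂ v (Matrix.toEuclideanLin A y - (η : ℂ) • y) : ℂ) = 0

/-! The spectral projection splits `y = y_p + w` into two vectors that are orthogonal and
`A`-orthogonal, so the Rayleigh quotient of any combination `a y_p + b w` is the mean of `ρ(y_p)`
and `ρ(w)` weighted by `|a|² ‖y_p‖²` and `|b|² ‖w‖²`. For such a mean `m` the ratio
`(ρ(y_p) - m) / (m - ρ(w))` is the ratio of the two weights, so replacing `y = y_p + w` by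
`y° = f(λ_p) y_p + ν_p w` multiplies it by `ν_p² / f(λ_p)²`. The chain
`ρ(w) ≤ λ_{p+1} < ρ(y) < λ_p ≤ ρ(y_p)` excludes `y_p = 0`, `w = 0` and `ρ(y_p) = ρ(w)`. -/

open Finset

theorem sub_weightedMean_div_weightedMean_sub {P Q s t : ℝ} (hst : s + t ≠ 0) (hPQ : P ≠ Q) :
    (P - (s * P + t * Q) / (s + t)) / ((s * P + t * Q) / (s + t) - Q) = t / s := by
  rw [div_sub' hst, sub_div' hst, div_div_div_cancel_right₀ hst,
    show P * (s + t) - (s * P + t * Q) = t * (P - Q) by ring,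
    show s * P + t * Q - (s + t) * Q = s * (P - Q) by ring,
    mul_div_mul_right _ _ (sub_ne_zero.2 hPQ)]

section InnerProductSpace

variable {𝕜 E ι : Type*} [RCLike 𝕜] [NormedAddCommGroup E] [InnerProductSpace 𝕜 E]

theorem norm_smul_add_smul_sq_of_inner_eq_zero {u w : E} (h : inner 𝕜 u w = 0) (a b : 𝕜) :
    ‖a • u + b • w‖ ^ 2 = ‖a‖ ^ 2 * ‖u‖ ^ 2 + ‖b‖ ^ 2 * ‖w‖ ^ 2 := by
  rw [norm_add_sq (𝕜 := 𝕜), inner_smul_left, inner_smul_right, h]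
  simp [norm_smul, mul_pow]

theorem re_inner_map_smul_add_smul (T : E →ₗ[𝕜] E) {u w : E} (huw : inner 𝕜 u (T w) = 0)
    (hwu : inner 𝕜 w (T u) = 0) (a b : 𝕜) :
    RCLike.re (inner 𝕜 (a • u + b • w) (T (a • u + b • w)))
      = ‖a‖ ^ 2 * RCLike.re (inner 𝕜 u (T u)) + ‖b‖ ^ 2 * RCLike.re (inner 𝕜 w (T w)) := by
  simp only [map_add, map_smul, inner_add_left, inner_add_right, inner_smul_left,
    inner_smul_right, huw, hwu, mul_zero, add_zero, zero_add, ← mul_assoc, RCLike.mul_conj,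
    ← RCLike.ofReal_pow, RCLike.re_ofReal_mul]

variable {x : ι → E}

theorem Orthonormal.sum_inner_smul_of_card_eq_finrank [Fintype ι] [FiniteDimensional 𝕜 E]
    (hx : Orthonormal 𝕜 x) (hcard : Fintype.card ι = Module.finrank 𝕜 E) (y : E) :
    ∑ i, inner 𝕜 (x i) y • x i = y := by
  have hspan := (hx.linearIndependent.span_eq_top_of_card_eq_finrank' hcard).ge
  simpa [OrthonormalBasis.coe_mk] using (OrthonormalBasis.mk hx hspan).sum_repr' y

theorem Orthonormal.inner_sum_smul_eq_zero_of_disjoint (hx : Orthonormal 𝕜 x)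
    {F G : Finset ι} (hFG : Disjoint F G) (a b : ι → 𝕜) :
    inner 𝕜 (∑ i ∈ F, a i • x i) (∑ j ∈ G, b j • x j) = 0 := by
  simp_rw [sum_inner, inner_sum, inner_smul_left, inner_smul_right]
  refine sum_eq_zero fun i hi => sum_eq_zero fun j hj => ?_
  have hij : i ≠ j := by rintro rfl; exact disjoint_left.1 hFG hi hj
  rw [hx.inner_eq_zero hij, mul_zero, mul_zero]

theorem Orthonormal.norm_sum_smul_sq (hx : Orthonormal 𝕜 x) (F : Finset ι) (c : ι → 𝕜) :
    ‖∑ i ∈ F, c i • x i‖ ^ 2 = ∑ i ∈ F, ‖c i‖ ^ 2 := by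
  rw [← inner_self_eq_norm_sq (𝕜 := 𝕜), hx.inner_sum, map_sum]
  simp_rw [RCLike.conj_mul]
  norm_cast

variable {T : E →ₗ[𝕜] E} {lam : ι → ℝ}

theorem map_sum_smul_of_forall_eigen (heig : ∀ i, T (x i) = (lam i : 𝕜) • x i)
    (F : Finset ι) (c : ι → 𝕜) :
    T (∑ i ∈ F, c i • x i) = ∑ i ∈ F, ((lam i : 𝕜) * c i) • x i := by
  simp only [map_sum, map_smul, heig, smul_smul, mul_comm]

theorem Orthonormal.inner_sum_smul_map_sum_smul_eq_zero_of_disjoint (hx : Orthonormal 𝕜 x)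
    (heig : ∀ i, T (x i) = (lam i : 𝕜) • x i) {F G : Finset ι} (hFG : Disjoint F G)
    (a b : ι → 𝕜) :
    inner 𝕜 (∑ i ∈ F, a i • x i) (T (∑ j ∈ G, b j • x j)) = 0 := by
  rw [map_sum_smul_of_forall_eigen heig]
  exact hx.inner_sum_smul_eq_zero_of_disjoint hFG _ _

theorem Orthonormal.re_inner_sum_smul_map (hx : Orthonormal 𝕜 x)
    (heig : ∀ i, T (x i) = (lam i : 𝕜) • x i) (F : Finset ι) (c : ι → 𝕜) :
    RCLike.re (inner 𝕜 (∑ i ∈ F, c i • x i) (T (∑ i ∈ F, c i • x i)))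
      = ∑ i ∈ F, lam i * ‖c i‖ ^ 2 := by
  rw [map_sum_smul_of_forall_eigen heig, hx.inner_sum, map_sum]
  refine sum_congr rfl fun i _ => ?_
  rw [mul_left_comm, RCLike.conj_mul, ← RCLike.ofReal_pow, RCLike.re_ofReal_mul,
    RCLike.ofReal_re]

theorem Orthonormal.mul_norm_sq_le_re_inner_map (hx : Orthonormal 𝕜 x)
    (heig : ∀ i, T (x i) = (lam i : 𝕜) • x i) {F : Finset ι} {L : ℝ}
    (hL : ∀ i ∈ F, L ≤ lam i) (c : ι → 𝕜) :
    L * ‖∑ i ∈ F, c i • x i‖ ^ 2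
      ≤ RCLike.re (inner 𝕜 (∑ i ∈ F, c i • x i) (T (∑ i ∈ F, c i • x i))) := by
  rw [hx.norm_sum_smul_sq, hx.re_inner_sum_smul_map heig, mul_sum]
  exact sum_le_sum fun i hi => mul_le_mul_of_nonneg_right (hL i hi) (sq_nonneg _)

theorem Orthonormal.re_inner_map_le_mul_norm_sq (hx : Orthonormal 𝕜 x)
    (heig : ∀ i, T (x i) = (lam i : 𝕜) • x i) {F : Finset ι} {L : ℝ}
    (hL : ∀ i ∈ F, lam i ≤ L) (c : ι → 𝕜) :
    RCLike.re (inner 𝕜 (∑ i ∈ F, c i • x i) (T (∑ i ∈ F, c i • x i)))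
      ≤ L * ‖∑ i ∈ F, c i • x i‖ ^ 2 := by
  rw [hx.norm_sum_smul_sq, hx.re_inner_sum_smul_map heig, mul_sum]
  exact sum_le_sum fun i hi => mul_le_mul_of_nonneg_right (hL i hi) (sq_nonneg _)

end InnerProductSpace

section Rayleigh

variable {n : ℕ} {A : Matrix (Fin n) (Fin n) ℂ}

theorem rayleigh_smul_add_smul {u w : EuclideanSpace ℂ (Fin n)} (hu : u ≠ 0) (hw : w ≠ 0)
    (h : inner ℂ u w = 0) (huw : inner ℂ u (Matrix.toEuclideanLin A w) = 0)
    (hwu : inner ℂ w (Matrix.toEuclideanLin A u) = 0) (a b : ℂ) :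
    rayleigh A (a • u + b • w)
      = (‖a‖ ^ 2 * ‖u‖ ^ 2 * rayleigh A u + ‖b‖ ^ 2 * ‖w‖ ^ 2 * rayleigh A w)
        / (‖a‖ ^ 2 * ‖u‖ ^ 2 + ‖b‖ ^ 2 * ‖w‖ ^ 2) := by
  have hu2 : ‖u‖ ^ 2 ≠ 0 := by positivity
  have hw2 : ‖w‖ ^ 2 ≠ 0 := by positivity
  have hre := re_inner_map_smul_add_smul _ huw hwu a b
  simp only [RCLike.re_to_complex] at hre
  rw [rayleigh, hre, norm_smul_add_smul_sq_of_inner_eq_zero h, rayleigh, rayleigh,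
    mul_assoc, mul_div_cancel₀ _ hu2, mul_assoc (‖b‖ ^ 2), mul_div_cancel₀ _ hw2]

variable {lam : Fin n → ℝ} {x : Fin n → EuclideanSpace ℂ (Fin n)}

theorem Orthonormal.le_rayleigh_sum_smul (hx : Orthonormal ℂ x)
    (heig : ∀ j, Matrix.toEuclideanLin A (x j) = (lam j : ℂ) • x j) {F : Finset (Fin n)}
    {L : ℝ} (hL : ∀ j ∈ F, L ≤ lam j) {c : Fin n → ℂ} (hv : ∑ j ∈ F, c j • x j ≠ 0) :
    L ≤ rayleigh A (∑ j ∈ F, c j • x j) :=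
  (le_div_iff₀ (by positivity)).2 (hx.mul_norm_sq_le_re_inner_map heig hL c)

theorem Orthonormal.rayleigh_sum_smul_le (hx : Orthonormal ℂ x)
    (heig : ∀ j, Matrix.toEuclideanLin A (x j) = (lam j : ℂ) • x j) {F : Finset (Fin n)}
    {L : ℝ} (hL : ∀ j ∈ F, lam j ≤ L) {c : Fin n → ℂ} (hv : ∑ j ∈ F, c j • x j ≠ 0) :
    rayleigh A (∑ j ∈ F, c j • x j) ≤ L :=
  (div_le_iff₀ (by positivity)).2 (hx.re_inner_map_le_mul_norm_sq heig hL c)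

end Rayleigh

/-- Under `η_p > λ_{p+1}` and `|f(λ₁)| ≥ ⋯ ≥ |f(λ_p)| > ν_p`,
for a nonzero `y ∈ 𝒴` with `η_p ≤ ρ(y) < λ_p` and
`y° = f(λ_p) y_p + ν_p (y − y_p)`, one has `y_p ≠ 0`, `y − y_p ≠ 0` and
`(ρ(y_p) − ρ(y°))/(ρ(y°) − ρ(y − y_p)) = (ν_p²/|f(λ_p)|²)·(ρ(y_p) − ρ(y))/(ρ(y) − ρ(y − y_p))`.
(0-indexed: `lam ⟨j⟩` is `λ_{j+1}`.) -/
theorem stmt5 {n p : ℕ} (hpn : p < n)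
    (A : Matrix (Fin n) (Fin n) ℂ)
    (lam : Fin n → ℝ) (hlam : Antitone lam)
    (x : Fin n → EuclideanSpace ℂ (Fin n)) (hx : Orthonormal ℂ x)
    (heig : ∀ j, Matrix.toEuclideanLin A (x j) = (lam j : ℂ) • x j)
    (Y : Submodule ℂ (EuclideanSpace ℂ (Fin n)))
    (hηp : lam ⟨p, hpn⟩ < ritzValue A Y p)
    (f : ℝ → ℝ) (νp : ℝ)
    (hνp : IsGreatest ((fun j => |f (lam j)|) '' {j : Fin n | p ≤ (j : ℕ)}) νp)
    (hgt : νp < |f (lam ⟨p - 1, by omega⟩)|)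
    (y : EuclideanSpace ℂ (Fin n)) (hy0 : y ≠ 0)
    (hyge : ritzValue A Y p ≤ rayleigh A y)
    (hylt : rayleigh A y < lam ⟨p - 1, by omega⟩)
    (yp yo : EuclideanSpace ℂ (Fin n))
    (hyp : yp = ∑ j ∈ Finset.univ.filter (fun j : Fin n => (j : ℕ) < p),
      (inner ℂ (x j) y : ℂ) • x j)
    (hyo : yo = (f (lam ⟨p - 1, by omega⟩) : ℂ) • yp + (νp : ℂ) • (y - yp)) :
    yp ≠ 0 ∧ y - yp ≠ 0 ∧
    (rayleigh A yp - rayleigh A yo) / (rayleigh A yo - rayleigh A (y - yp)) =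
      νp ^ 2 / |f (lam ⟨p - 1, by omega⟩)| ^ 2 *
        ((rayleigh A yp - rayleigh A y) / (rayleigh A y - rayleigh A (y - yp))) := by
  set α := f (lam ⟨p - 1, by omega⟩)
  set c : Fin n → ℂ := fun j => inner ℂ (x j) y
  have hdisj := disjoint_filter_filter_not univ univ (fun j : Fin n => (j : ℕ) < p)
  have hw : y - yp = ∑ j ∈ univ.filter (fun j : Fin n => ¬ (j : ℕ) < p), c j • x j := by
    rw [hyp, sub_eq_iff_eq_add', sum_filter_add_sum_filter_not,
      hx.sum_inner_smul_of_card_eq_finrank (by simp)]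
  have hρyp (h : yp ≠ 0) : lam ⟨p - 1, by omega⟩ ≤ rayleigh A yp := by
    rw [hyp] at h ⊢
    refine hx.le_rayleigh_sum_smul heig (fun j hj => hlam ?_) h
    exact Fin.le_def.2 (show (j : ℕ) ≤ p - 1 by simp only [mem_filter] at hj; omega)
  have hρw (h : y - yp ≠ 0) : rayleigh A (y - yp) ≤ lam ⟨p, hpn⟩ := by
    rw [hw] at h ⊢
    refine hx.rayleigh_sum_smul_le heig (fun j hj => hlam ?_) h
    exact Fin.le_def.2 (show p ≤ (j : ℕ) by simp only [mem_filter] at hj; omega)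
  have hlam_lt : lam ⟨p, hpn⟩ < rayleigh A y := hηp.trans_le hyge
  have hyp0 : yp ≠ 0 := fun h => (hρw (by rwa [h, sub_zero])).not_gt (by rwa [h, sub_zero])
  have hw0 : y - yp ≠ 0 := fun h => (hρyp hyp0).not_gt (by rwa [← sub_eq_zero.1 h])
  have hPQ : rayleigh A yp ≠ rayleigh A (y - yp) :=
    ((hρw hw0).trans_lt (hlam_lt.trans (hylt.trans_le (hρyp hyp0)))).ne'
  have hρ := rayleigh_smul_add_smul hyp0 hw0
    (by rw [hw, hyp]; exact hx.inner_sum_smul_eq_zero_of_disjoint hdisj c c)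
    (by rw [hw, hyp]; exact hx.inner_sum_smul_map_sum_smul_eq_zero_of_disjoint heig hdisj c c)
    (by rw [hw, hyp]; exact hx.inner_sum_smul_map_sum_smul_eq_zero_of_disjoint heig hdisj.symm c c)
  have hν : 0 ≤ νp := by
    obtain ⟨j, -, rfl⟩ := hνp.1
    exact abs_nonneg _
  have hα : 0 < |α| := hν.trans_lt hgt
  have hρy := hρ 1 1
  simp only [one_smul, add_sub_cancel, norm_one, one_pow, one_mul] at hρy
  have hρyo := hρ α νp
  rw [← hyo, Complex.norm_real, Complex.norm_real, Real.norm_eq_abs, Real.norm_eq_abs,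
    abs_of_nonneg hν] at hρyo
  refine ⟨hyp0, hw0, ?_⟩
  rw [hρy, hρyo, sub_weightedMean_div_weightedMean_sub (by positivity) hPQ,
    sub_weightedMean_div_weightedMean_sub (by positivity) hPQ, mul_div_mul_comm]
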